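/- arXiv:math/0505329 — 3 statements merged into one kernel-verified Lean document; each statement's English description precedes it below -/
import Mathlib

section
/- Let P be a poset and α ∈ P. Let Δ(P_{>α})^{op} be the opposite of the order complex category of the poset of elements strictly above α, and let p_α be its full subcategory whose objects are the chains of length at most 2 (i.e., objects (α₀) and (α₀,α₁)), with morphisms generated by ∂₀ : (α₀,α₁) → (α₁) and ∂₁ : (α₀,α₁) → (α₀). Then the inclusion p_α → Δ(P_{>α})^{op} is a final functor: for every chain k of P_{>α}, the comma category (k ↓ p_α) is nonempty and connected. -/
/-- The objects of the comma category `(k ↓ p_α)`: nonempty subchains of the chain `k`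
having at most 2 elements (i.e. morphisms in `Δ(P_{>α})^{op}` from `k` to an object of
the subcategory `p_α`). -/
def twoChainsUnder {P : Type*} [PartialOrder P] {α : P}
    (k : Finset {x : P // α < x}) : Set (Finset {x : P // α < x}) :=
  {c | c.Nonempty ∧ c ⊆ k ∧ c.card ≤ 2}

/-- The full subcategory `p_α` of `Δ(P_{>α})^{op}` on the chains with at most two
elements is final: for every chain `k` of `P_{>α}`, the comma category `(k ↓ p_α)` is
nonempty and connected (any two of its objects are joined by a zigzag of inclusions). -/
theorem twoChains_final {P : Type*} [PartialOrder P] (α : P)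
    (k : Finset {x : P // α < x}) (hk : k.Nonempty)
    (hchain : IsChain (· ≤ ·) (↑k : Set {x : P // α < x})) :
    (twoChainsUnder k).Nonempty ∧
    ∀ c ∈ twoChainsUnder k, ∀ d ∈ twoChainsUnder k,
      Relation.ReflTransGen
        (fun x y : Finset {x : P // α < x} =>
          x ∈ twoChainsUnder k ∧ y ∈ twoChainsUnder k ∧ (x ⊆ y ∨ y ⊆ x)) c d := by
  classical
  obtain ⟨a, ha⟩ := hk
  constructor
  · exact ⟨{a}, ⟨a, Finset.mem_singleton_self a⟩,
      Finset.singleton_subset_iff.mpr ha, by simp⟩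
  · rintro c ⟨⟨x, hx⟩, hck, hc2⟩ d ⟨⟨y, hy⟩, hdk, hd2⟩
    have hxk : x ∈ k := hck hx
    have hyk : y ∈ k := hdk hy
    have hxmem : ({x} : Finset _) ∈ twoChainsUnder k :=
      ⟨⟨x, Finset.mem_singleton_self x⟩, Finset.singleton_subset_iff.mpr hxk, by simp⟩
    have hymem : ({y} : Finset _) ∈ twoChainsUnder k :=
      ⟨⟨y, Finset.mem_singleton_self y⟩, Finset.singleton_subset_iff.mpr hyk, by simp⟩
    have hxymem : ({x, y} : Finset _) ∈ twoChainsUnder k := by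
      refine ⟨⟨x, by simp⟩, ?_, ?_⟩
      · intro z hz
        rcases Finset.mem_insert.mp hz with h | h
        · exact h ▸ hxk
        · exact (Finset.mem_singleton.mp h) ▸ hyk
      · exact (Finset.card_insert_le _ _).trans (by simp)
    have hcmem : c ∈ twoChainsUnder k := ⟨⟨x, hx⟩, hck, hc2⟩
    have hdmem : d ∈ twoChainsUnder k := ⟨⟨y, hy⟩, hdk, hd2⟩
    refine Relation.ReflTransGen.trans (Relation.ReflTransGen.single
        ⟨hcmem, hxmem, Or.inr (Finset.singleton_subset_iff.mpr hx)⟩) ?_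
    refine Relation.ReflTransGen.trans (Relation.ReflTransGen.single
        ⟨hxmem, hxymem, Or.inl (by intro z hz; simp_all)⟩) ?_
    refine Relation.ReflTransGen.trans (Relation.ReflTransGen.single
        ⟨hxymem, hymem, Or.inr (by intro z hz; simp_all)⟩) ?_
    exact Relation.ReflTransGen.single
        ⟨hymem, hdmem, Or.inl (Finset.singleton_subset_iff.mpr hy)⟩
end

section
/- Let M be a model category, λ an ordinal, and (f_μ : A_μ → B_μ)_{μ<λ} a λ-sequence of morphisms (i.e., a colimit-preserving functor λ → M^{[1]} into the arrow category). Suppose for each μ < λ either A_μ → A_{μ+1} is an isomorphism or the square with vertical maps f_μ, f_{μ+1} and horizontal maps A_μ → A_{μ+1}, B_μ → B_{μ+1} is a pushout, and that every B_μ → B_{μ+1} is a cofibration. If f₀ : A₀ → B₀ is a cofibration, then the induced map f_λ : colim A_μ → colim B_μ is a cofibration. -/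
/-!
A lifting problem for `colimMap f` against `p` is the same as one for `f` against the
constant transformation `(Functor.const J).map p` in `J ⥤ M`, and a solution of the latter is
a section of the inverse system of stagewise lifts `G_j ⟶ X`. Such a section exists by
transfinite induction (`WellOrderInductionData`): at `⊥` one lifts against `f₀`; at a successor
one either lifts along `G_j ⟶ G_{j+1}`, the compatibility with `F_{j+1} ⟶ X` being automatic
because `F_j ⟶ F_{j+1}` is epi, or glues through the pushout square; at a limit stage the
continuity of `F` and `G` glues the lifts below.
-/

open CategoryTheory CategoryTheory.Limits

/-- The restriction of a diagram `F : J ⥤ M` to the elements strictly below `j`. -/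
def restrictDiagram {M : Type u} [Category.{v} M] {J : Type w} [Preorder J]
    (F : J ⥤ M) (j : J) : {i : J // i < j} ⥤ M :=
  (show Monotone (Subtype.val : {i : J // i < j} → J) from fun _ _ h => h).functor ⋙ F

/-- The cocone on the restriction of `F` below `j` with apex `F.obj j`.  Saying that it
is a colimit cocone for every limit element `j` expresses that `F` is a `λ`-sequence
(a colimit-preserving functor). -/
def restrictCocone {M : Type u} [Category.{v} M] {J : Type w} [Preorder J]
    (F : J ⥤ M) (j : J) : Cocone (restrictDiagram F j) where
  pt := F.obj j
  ι :=
    { app := fun i => F.map (homOfLE i.2.le)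
      naturality := fun a b g => by
        dsimp [restrictDiagram]
        rw [Category.comp_id]
        exact (F.map_comp _ _).symm }

namespace CategoryTheory.TransfiniteLifting

variable {M : Type u} [Category.{v} M] {J : Type w}

lemma map_comp_app_const [Category J] {F : J ⥤ M} {X : M} (a : F ⟶ (Functor.const J).obj X)
    {i k : J} (g : i ⟶ k) : F.map g ≫ a.app k = a.app i := by
  simp

section Stages

variable [Preorder J] {F G : J ⥤ M} (f : F ⟶ G) {X Y : M} (p : X ⟶ Y)
  (a : F ⟶ (Functor.const J).obj X) (b : G ⟶ (Functor.const J).obj Y)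

/-- The lifts at stage `j` of the square `a, f, (Functor.const J).map p, b` in `J ⥤ M`;
a section of this inverse system is exactly a lift of that square. -/
def stageLifts : Jᵒᵖ ⥤ Type v where
  obj j := {l : G.obj j.unop ⟶ X // f.app j.unop ≫ l = a.app j.unop ∧ l ≫ p = b.app j.unop}
  map α := TypeCat.ofHom fun l => ⟨G.map α.unop ≫ l.1,
    by rw [← f.naturality_assoc, l.2.1, map_comp_app_const],
    by rw [Category.assoc, l.2.2, map_comp_app_const]⟩

variable {f p a b}

lemma stageLifts_map_surjective_of_epi {i k : J} (hik : i ≤ k)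
    [Epi (F.map (homOfLE hik))] [HasLiftingProperty (G.map (homOfLE hik)) p] :
    Function.Surjective ((stageLifts f p a b).map (homOfLE hik).op) := by
  intro l
  have sq : CommSq l.1 (G.map (homOfLE hik)) p (b.app k) :=
    ⟨by rw [l.2.2, map_comp_app_const]⟩
  refine ⟨⟨sq.lift, ?_, sq.fac_right⟩, Subtype.ext sq.fac_left⟩
  rw [← cancel_epi (F.map (homOfLE hik)), f.naturality_assoc, sq.fac_left, l.2.1,
    map_comp_app_const]

lemma stageLifts_map_surjective_of_isPushout (hab : a ≫ (Functor.const J).map p = f ≫ b)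
    {i k : J} (hik : i ≤ k)
    (h : IsPushout (F.map (homOfLE hik)) (f.app i) (f.app k) (G.map (homOfLE hik))) :
    Function.Surjective ((stageLifts f p a b).map (homOfLE hik).op) := by
  intro l
  have w : F.map (homOfLE hik) ≫ a.app k = f.app i ≫ l.1 := by
    rw [l.2.1, map_comp_app_const]
  refine ⟨⟨h.desc (a.app k) l.1 w, h.inl_desc _ _ _, ?_⟩, Subtype.ext (h.inr_desc _ _ _)⟩
  apply h.hom_ext
  · rw [h.inl_desc_assoc]
    exact NatTrans.congr_app hab k
  · rw [h.inr_desc_assoc, l.2.2, map_comp_app_const]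

lemma exists_stageLifts_of_isColimit {j : J} (hF : IsColimit (restrictCocone F j))
    (hG : IsColimit (restrictCocone G j))
    (x : ((OrderHom.Subtype.val (· ∈ Set.Iio j)).monotone.functor.op ⋙
      stageLifts f p a b).sections) :
    ∃ y : (stageLifts f p a b).obj (.op j), ∀ (i : J) (hi : i < j),
      (stageLifts f p a b).map (homOfLE hi.le).op y = x.val (.op ⟨i, hi⟩) := by
  let c : Cocone (restrictDiagram G j) :=
    { pt := X
      ι :=
        { app i := (x.val (.op i)).1
          naturality i k g :=
            (congrArg Subtype.val (x.property g.op)).trans (Category.comp_id _).symm } }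
  obtain ⟨l, hl⟩ : ∃ l : G.obj j ⟶ X,
      ∀ i (hi : i < j), G.map (homOfLE hi.le) ≫ l = (x.val (.op ⟨i, hi⟩)).1 :=
    ⟨hG.desc c, fun i hi => hG.fac c ⟨i, hi⟩⟩
  refine ⟨⟨l, hF.hom_ext fun ⟨i, hi⟩ => ?_, hG.hom_ext fun ⟨i, hi⟩ => ?_⟩,
    fun i hi => Subtype.ext (hl i hi)⟩
  · change F.map (homOfLE hi.le) ≫ f.app j ≫ l = F.map (homOfLE hi.le) ≫ a.app j
    rw [f.naturality_assoc, hl i hi, map_comp_app_const]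
    exact (x.val (.op ⟨i, hi⟩)).2.1
  · change G.map (homOfLE hi.le) ≫ l ≫ p = G.map (homOfLE hi.le) ≫ b.app j
    rw [← Category.assoc, hl i hi, map_comp_app_const]
    exact (x.val (.op ⟨i, hi⟩)).2.2

lemma nonempty_stageLifts_bot [OrderBot J] (hab : a ≫ (Functor.const J).map p = f ≫ b)
    [HasLiftingProperty (f.app ⊥) p] : Nonempty ((stageLifts f p a b).obj (.op ⊥)) :=
  have sq : CommSq (a.app ⊥) (f.app ⊥) p (b.app ⊥) := ⟨NatTrans.congr_app hab ⊥⟩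
  ⟨⟨sq.lift, sq.fac_left, sq.fac_right⟩⟩

end Stages

variable [LinearOrder J] [OrderBot J] [SuccOrder J] [WellFoundedLT J] {F G : J ⥤ M} (f : F ⟶ G)
  {X Y : M} (p : X ⟶ Y)

theorem hasLiftingProperty_const_map
    (hF : ∀ j : J, Order.IsSuccLimit j → Nonempty (IsColimit (restrictCocone F j)))
    (hG : ∀ j : J, Order.IsSuccLimit j → Nonempty (IsColimit (restrictCocone G j)))
    (hstep : ∀ j : J, ¬ IsMax j →
      IsIso (F.map (homOfLE (Order.le_succ j))) ∨
      IsPushout (F.map (homOfLE (Order.le_succ j))) (f.app j) (f.app (Order.succ j))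
        (G.map (homOfLE (Order.le_succ j))))
    [HasLiftingProperty (f.app ⊥) p]
    (hGsucc : ∀ j : J, ¬ IsMax j → HasLiftingProperty (G.map (homOfLE (Order.le_succ j))) p) :
    HasLiftingProperty f ((Functor.const J).map p) where
  sq_hasLift {a b} sq := by
    have d : (stageLifts f p a b).WellOrderInductionData := .ofExists
      (fun j hj => (hstep j hj).elim
        (fun _ => have := hGsucc j hj; stageLifts_map_surjective_of_epi _)
        (stageLifts_map_surjective_of_isPushout sq.w _))
      (fun j hj => exists_stageLifts_of_isColimit (hF j hj).some (hG j hj).some)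
    obtain ⟨s, -⟩ := d.surjective (nonempty_stageLifts_bot sq.w).some
    let l : G ⟶ (Functor.const J).obj X :=
      { app j := (s.val (.op j)).1
        naturality i k g :=
          (congrArg Subtype.val (s.property g.op)).trans (Category.comp_id _).symm }
    exact ⟨⟨⟨l, by ext j; exact (s.val (.op j)).2.1, by ext j; exact (s.val (.op j)).2.2⟩⟩⟩

theorem hasLiftingProperty_colimMap {J : Type w} [Category J] {F G : J ⥤ M} [HasColimit F]
    [HasColimit G] (f : F ⟶ G) {X Y : M} (p : X ⟶ Y)
    [HasLiftingProperty f ((Functor.const J).map p)] : HasLiftingProperty (colimMap f) p where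
  sq_hasLift {u v} sq := by
    have sq' : CommSq ((colimit.cocone F).ι ≫ (Functor.const J).map u) f
        ((Functor.const J).map p) ((colimit.cocone G).ι ≫ (Functor.const J).map v) :=
      ⟨by ext j; simp [sq.w]⟩
    refine ⟨⟨⟨colimit.desc G ⟨X, sq'.lift⟩, colimit.hom_ext fun j => ?_,
      colimit.hom_ext fun j => ?_⟩⟩⟩
    · rw [ι_colimMap_assoc, colimit.ι_desc]
      exact NatTrans.congr_app sq'.fac_left j
    · rw [colimit.ι_desc_assoc]
      exact NatTrans.congr_app sq'.fac_right j

end CategoryTheory.TransfiniteLifting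

open CategoryTheory.TransfiniteLifting in
/-- Mixed transfinite compositions of pushouts and cofibrations.  In a model category
(where the cofibrations `cof` are exactly the maps with the left lifting property with
respect to the trivial fibrations `tfib`), given a `λ`-sequence of morphisms
`f_μ : A_μ → B_μ` such that at each step either `A_μ → A_{μ+1}` is an isomorphism or the
square is a pushout, and each `B_μ → B_{μ+1}` is a cofibration, if `f₀` is a cofibration
then the induced map on colimits is a cofibration. -/
theorem transfinite_mixed_cofibration {M : Type u} [Category.{v} M]
    (cof tfib : MorphismProperty M)
    (hcof : ∀ {A B : M} (f : A ⟶ B),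
      cof f ↔ ∀ {X Y : M} (p : X ⟶ Y), tfib p → HasLiftingProperty f p)
    {J : Type w} [LinearOrder J] [OrderBot J] [SuccOrder J] [WellFoundedLT J]
    (F G : J ⥤ M) (f : F ⟶ G) [HasColimit F] [HasColimit G]
    (hsmoothF : ∀ j : J, Order.IsSuccLimit j → Nonempty (IsColimit (restrictCocone F j)))
    (hsmoothG : ∀ j : J, Order.IsSuccLimit j → Nonempty (IsColimit (restrictCocone G j)))
    (hstep : ∀ j : J, ¬ IsMax j →
      IsIso (F.map (homOfLE (Order.le_succ j))) ∨
      IsPushout (F.map (homOfLE (Order.le_succ j))) (f.app j) (f.app (Order.succ j))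
        (G.map (homOfLE (Order.le_succ j))))
    (hcofstep : ∀ j : J, ¬ IsMax j → cof (G.map (homOfLE (Order.le_succ j))))
    (h0 : cof (f.app ⊥)) :
    cof (colimMap f) := by
  refine (hcof _).2 fun p hp => ?_
  have := (hcof _).1 h0 p hp
  have := hasLiftingProperty_const_map f p hsmoothF hsmoothG hstep
    fun j hj => (hcof _).1 (hcofstep j hj) p hp
  exact hasLiftingProperty_colimMap f p
end

section
/- Let X be a loopless flow (as a poset X⁰ with path sets P_{α,β} for α < β and associative composition) and α ∈ X⁰. Then the colimit over Δ(X⁰_{>α})^{op} of the diagram 𝒫_α(X) (defined on chains by 𝒫(α₀,…,α_p) = P_{α,α₀} × ⋯ × P_{α_{p-1},α_p}, with faces by composition and final projection) is isomorphic to the branching object P⁻_α X, i.e., the quotient of ⊔_{β>α} P_{α,β} by the smallest equivalence relation identifying x with x*y whenever defined. -/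
/-- The `i`-th face map on composable tuples of paths: composition of adjacent factors
for `i < p`, projection forgetting the last factor for `i = p`. -/
def face {Path : Type*} (comp : Path → Path → Path) {p : ℕ}
    (i : Fin (p + 1)) (γ : Fin (p + 1) → Path) (j : Fin p) : Path :=
  if (j : ℕ) < (i : ℕ) then γ j.castSucc
  else if (j : ℕ) = (i : ℕ) then comp (γ j.castSucc) (γ j.succ)
  else γ j.succ

/-- The composite `γ₀ * γ₁ * ⋯ * γ_p` of a tuple of paths. -/
def compAll {Path : Type*} (comp : Path → Path → Path) :
    ∀ {p : ℕ}, (Fin (p + 1) → Path) → Path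
  | 0, γ => γ 0
  | (_ + 1), γ => comp (γ 0) (compAll comp (fun j => γ j.succ))

/-- A composable tuple of paths starting at `α`: an object of the total diagram
`𝒫_α(X)`, namely an element of `P_{α,α₀} × P_{α₀,α₁} × ⋯ × P_{α_{p-1},α_p}` for some
chain `(α₀,…,α_p)`. -/
structure Tup {S Path : Type*} (s t : Path → S) (α : S) where
  len : ℕ
  γ : Fin (len + 1) → Path
  hsrc : s (γ 0) = α
  hcomp : ∀ j : Fin len, t (γ j.castSucc) = s (γ j.succ)

/-- The relation generated by the face maps of the diagram `𝒫_α(X)`; the colimit of the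
diagram over `Δ(X⁰_{>α})^{op}` is the quotient of the tuples by (the equivalence
generated by) this relation. -/
def faceRel {S Path : Type*} (s t : Path → S) (comp : Path → Path → Path) (α : S) :
    Tup s t α → Tup s t α → Prop :=
  fun a b => ∃ (h : a.len = b.len + 1) (i : Fin (b.len + 2)),
    b.γ = face comp i (fun k : Fin (b.len + 2) => a.γ (Fin.cast (by rw [h]) k))

/-- Paths starting at `α`. -/
def PathFrom {S Path : Type*} (s : Path → S) (α : S) : Type _ := {x : Path // s x = α}

/-- The germ relation on paths starting at `α` : `x ∼ x * y`. -/
def germRelAt {S Path : Type*} (s t : Path → S) (comp : Path → Path → Path) (α : S) :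
    PathFrom s α → PathFrom s α → Prop :=
  fun a b => ∃ y : Path, t a.1 = s y ∧ b.1 = comp a.1 y


section Aux
variable {S Path : Type*} {α : S}

lemma s_compAll (s : Path → S) (comp : Path → Path → Path)
    (hs : ∀ x y : Path, s (comp x y) = s x) :
    ∀ {p : ℕ} (γ : Fin (p + 1) → Path), s (compAll comp γ) = s (γ 0)
  | 0, _ => rfl
  | (_+1), γ => hs _ _

lemma t_compAll (t : Path → S) (comp : Path → Path → Path)
    (ht : ∀ x y : Path, t (comp x y) = t y) :
    ∀ {p : ℕ} (γ : Fin (p + 1) → Path), t (compAll comp γ) = t (γ (Fin.last p))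
  | 0, _ => rfl
  | (p+1), γ => by
      show t (comp (γ 0) (compAll comp fun j => γ j.succ)) = _
      rw [ht, t_compAll t comp ht]
      exact congrArg t (congrArg γ (Fin.ext rfl))

lemma compAll_last {Path : Type*} (comp : Path → Path → Path)
    (hassoc : ∀ x y z : Path, comp (comp x y) z = comp x (comp y z)) :
    ∀ {p : ℕ} (γ : Fin (p + 2) → Path),
      compAll comp γ
        = comp (compAll comp (fun j : Fin (p+1) => γ j.castSucc)) (γ (Fin.last (p+1)))
  | 0, γ => by
      show comp (γ 0) (γ (0 : Fin 1).succ) = comp (γ (0 : Fin 1).castSucc) (γ (Fin.last 1))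
      exact congrArg₂ comp (congrArg γ (Fin.ext rfl)) (congrArg γ (Fin.ext rfl))
  | (p+1), γ => by
      show comp (γ 0) (compAll comp fun j => γ j.succ) = _
      rw [compAll_last comp hassoc (fun j : Fin (p+2) => γ j.succ)]
      rw [← hassoc]
      have h1 : (fun j : Fin (p+1) => γ (Fin.castSucc j).succ)
          = fun j : Fin (p+1) => γ (Fin.succ j).castSucc :=
        funext fun j => congrArg γ (Fin.ext rfl)
      have h2 : compAll comp (fun j : Fin (p+2) => γ j.castSucc)
          = comp (γ (0 : Fin (p+2)).castSucc)
              (compAll comp fun j : Fin (p+1) => γ (Fin.succ j).castSucc) := rfl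
      rw [h2, ← h1]
      exact congrArg₂ comp (congrArg₂ comp (congrArg γ (Fin.ext rfl)) rfl)
        (congrArg γ (Fin.ext rfl))

end Aux

section Aux2
variable {Path : Type*} (comp : Path → Path → Path)

lemma face_zero_zero {p : ℕ} (γ : Fin (p + 2) → Path) :
    face comp (0 : Fin (p+2)) γ 0 = comp (γ 0) (γ 1) := by
  show (if ((0:Fin (p+1)) : ℕ) < ((0:Fin (p+2)) : ℕ) then _ else
    if ((0:Fin (p+1)) : ℕ) = ((0:Fin (p+2)) : ℕ) then
      comp (γ (0:Fin (p+1)).castSucc) (γ (0:Fin (p+1)).succ) else _) = _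
  rw [if_neg (by simp), if_pos (by simp)]
  exact congrArg₂ comp (congrArg γ (Fin.ext rfl)) (congrArg γ (Fin.ext rfl))

lemma face_zero_succ {p : ℕ} (γ : Fin (p + 2) → Path) (j : Fin p) :
    face comp (0 : Fin (p+2)) γ j.succ = γ j.succ.succ := by
  unfold face
  rw [if_neg (by simp), if_neg (by simp [Fin.val_succ])]

lemma face_pos_zero {p : ℕ} (i : Fin (p + 2)) (hi : 0 < (i : ℕ)) (γ : Fin (p + 2) → Path) :
    face comp i γ 0 = γ 0 := by
  unfold face
  rw [if_pos (by simpa using hi)]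
  exact congrArg γ (Fin.ext rfl)

lemma face_pos_succ {p : ℕ} (i : Fin (p + 3)) (hi : 0 < (i : ℕ)) (γ : Fin (p + 3) → Path)
    (j : Fin (p + 1)) :
    face comp i γ j.succ
      = face comp (⟨(i : ℕ) - 1, by omega⟩ : Fin (p + 2)) (fun k => γ k.succ) j := by
  unfold face
  have hv : (j.succ : ℕ) = (j : ℕ) + 1 := rfl
  by_cases h1 : ((j:ℕ)+1) < (i:ℕ)
  · rw [if_pos (by omega), if_pos (by simp; omega)]
    exact congrArg γ (Fin.ext rfl)
  · by_cases h2 : ((j:ℕ)+1) = (i:ℕ)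
    · rw [if_neg (by omega), if_pos (by omega), if_neg (by simp; omega), if_pos (by simp; omega)]
      exact congrArg₂ comp (congrArg γ (Fin.ext rfl)) (congrArg γ (Fin.ext rfl))
    · rw [if_neg (by omega), if_neg (by omega), if_neg (by simp; omega), if_neg (by simp; omega)]

lemma face_last {p : ℕ} (i : Fin (p + 2)) (hi : (i : ℕ) = p + 1) (γ : Fin (p + 2) → Path)
    (j : Fin (p + 1)) :
    face comp i γ j = γ j.castSucc := by
  unfold face
  rw [if_pos (by omega)]

lemma compAll_face (hassoc : ∀ x y z : Path, comp (comp x y) z = comp x (comp y z)) :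
    ∀ {p : ℕ} (i : Fin (p + 2)) (γ : Fin (p + 2) → Path), (i : ℕ) ≤ p →
      compAll comp (face comp i γ) = compAll comp γ
  | 0, i, γ, hle => by
      have hi : (i : ℕ) = 0 := Nat.le_zero.mp hle
      have hi0 : i = 0 := Fin.ext hi
      subst hi0
      show face comp 0 γ 0 = comp (γ 0) (γ (0 : Fin 1).succ)
      rw [face_zero_zero]
      exact congrArg₂ comp rfl (congrArg γ (Fin.ext rfl))
  | (p+1), i, γ, hle => by
      by_cases hi : (i : ℕ) = 0
      · have hi0 : i = 0 := Fin.ext hi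
        subst hi0
        show comp (face comp 0 γ 0) (compAll comp fun j => face comp 0 γ j.succ) = _
        rw [face_zero_zero]
        have : (fun j : Fin (p+1) => face comp 0 γ j.succ)
            = fun j : Fin (p+1) => γ j.succ.succ := funext fun j => face_zero_succ comp γ j
        rw [this, hassoc]
        show comp (γ 0) _ = comp (γ 0) (compAll comp fun j : Fin (p+2) => γ j.succ)
        refine congrArg₂ comp rfl ?_
        show comp (γ 1) (compAll comp fun j : Fin (p+1) => γ j.succ.succ)
          = comp (γ (0 : Fin (p+2)).succ)
              (compAll comp fun j : Fin (p+1) => (Fin.succ j).succ |> γ)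
        exact congrArg₂ comp (congrArg γ (Fin.ext rfl)) rfl
      · have hipos : 0 < (i : ℕ) := Nat.pos_of_ne_zero hi
        show comp (face comp i γ 0) (compAll comp fun j => face comp i γ j.succ) = _
        rw [face_pos_zero comp i hipos]
        have : (fun j : Fin (p+1) => face comp i γ j.succ)
            = face comp (⟨(i : ℕ) - 1, by omega⟩ : Fin (p + 2)) (fun k => γ k.succ) :=
          funext fun j => face_pos_succ comp i hipos γ j
        rw [this, compAll_face hassoc _ _ (by simp; omega)]
        rfl

end Aux2

section Aux3
variable {S Path : Type*} {s t : Path → S} {α : S}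

lemma tup_mk_eq {n : ℕ} {γ δ : Fin (n+1) → Path} (h : γ = δ)
    (h1 : s (γ 0) = α) (h2 : ∀ j : Fin n, t (γ j.castSucc) = s (γ j.succ))
    (h3 : s (δ 0) = α) (h4 : ∀ j : Fin n, t (δ j.castSucc) = s (δ j.succ)) :
    (⟨n, γ, h1, h2⟩ : Tup s t α) = ⟨n, δ, h3, h4⟩ := by subst h; rfl

/-- The zero-length tuple. -/
def tup0 (s t : Path → S) (x : Path) (hx : s x = α) : Tup s t α :=
  ⟨0, fun _ => x, hx, fun j => j.elim0⟩

lemma mk_eq_mk_compAll (comp : Path → Path → Path)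
    (hs : ∀ x y : Path, s (comp x y) = s x)
    (ht : ∀ x y : Path, t (comp x y) = t y)
    (hassoc : ∀ x y z : Path, comp (comp x y) z = comp x (comp y z))
    (a : Tup s t α) :
    Quot.mk (faceRel s t comp α) a
      = Quot.mk _ (tup0 s t (compAll comp a.γ)
          (by rw [s_compAll s comp hs]; exact a.hsrc)) := by
  obtain ⟨n, γ, h1, h2⟩ := a
  induction n with
  | zero =>
      have hγ : γ = (fun _ : Fin 1 => compAll comp γ) := funext fun j => by
        show γ j = γ 0
        exact congrArg γ (Fin.ext (by omega))
      exact congrArg (Quot.mk _) (tup_mk_eq hγ h1 h2 _ _)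
  | succ p ih =>
      set δ : Fin (p+1) → Path := face comp (0 : Fin (p+2)) γ with hδ
      have hδ0 : δ 0 = comp (γ 0) (γ 1) := face_zero_zero comp γ
      have hδsucc : ∀ j : Fin p, δ j.succ = γ j.succ.succ := face_zero_succ comp γ
      have hδ1 : s (δ 0) = α := by rw [hδ0, hs]; exact h1
      have hδ2 : ∀ j : Fin p, t (δ j.castSucc) = s (δ j.succ) := by
        intro j
        rcases Nat.eq_zero_or_pos (j : ℕ) with hj | hj
        · have hj0 : j.castSucc = 0 := Fin.ext hj
          rw [hj0, hδ0, hδsucc, ht]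
          have := h2 (⟨1, by omega⟩ : Fin (p+1))
          have e1 : (γ (⟨1, by omega⟩ : Fin (p+1)).castSucc) = γ 1 :=
            congrArg γ (Fin.ext rfl)
          have e2 : (γ (⟨1, by omega⟩ : Fin (p+1)).succ) = γ j.succ.succ :=
            congrArg γ (Fin.ext (by simp [Fin.val_succ]; omega))
          rw [e1, e2] at this
          exact this
        · have hcs : j.castSucc = (⟨(j:ℕ)-1, by omega⟩ : Fin p).succ :=
            Fin.ext (by simp [Fin.val_succ]; omega)
          rw [hcs, hδsucc, hδsucc]
          have := h2 (⟨(j:ℕ)+1, by omega⟩ : Fin (p+1))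
          have e1 : (γ (⟨(j:ℕ)+1, by omega⟩ : Fin (p+1)).castSucc)
              = γ (⟨(j:ℕ)-1, by omega⟩ : Fin p).succ.succ :=
            congrArg γ (Fin.ext (by simp [Fin.val_succ]; omega))
          have e2 : (γ (⟨(j:ℕ)+1, by omega⟩ : Fin (p+1)).succ) = γ j.succ.succ :=
            congrArg γ (Fin.ext rfl)
          rw [e1, e2] at this
          exact this
      have step : Quot.mk (faceRel s t comp α) (⟨p+1, γ, h1, h2⟩ : Tup s t α)
          = Quot.mk _ (⟨p, δ, hδ1, hδ2⟩ : Tup s t α) := by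
        refine Quot.sound ⟨rfl, 0, ?_⟩
        show δ = face comp 0 (fun k : Fin (p+2) => γ (Fin.cast (by rw []) k))
        have : (fun k : Fin (p+2) => γ (Fin.cast (by rw []) k)) = γ :=
          funext fun k => congrArg γ (Fin.ext rfl)
        rw [this]
      rw [step, ih δ hδ1 hδ2]
      refine congrArg (Quot.mk _) (tup_mk_eq ?_ _ _ _ _)
      have : compAll comp δ = compAll comp γ :=
        compAll_face comp hassoc 0 γ (by simp)
      rw [this]

end Aux3

/-- For a loopless flow (every path strictly increases the state), the colimit of the
diagram `𝒫_α(X)` over `Δ(X⁰_{>α})^{op}` — the quotient of composable tuples by the face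
relations — is isomorphic to the branching object `P⁻_α X`, the quotient of the paths
starting at `α` by the germ relation, via the map sending a tuple to the class of its
composite. -/
theorem colimit_diagram_iso_branching {S Path : Type*} [PartialOrder S]
    (s t : Path → S) (comp : Path → Path → Path)
    (hs : ∀ x y : Path, s (comp x y) = s x)
    (ht : ∀ x y : Path, t (comp x y) = t y)
    (hassoc : ∀ x y z : Path, comp (comp x y) z = comp x (comp y z))
    (hlt : ∀ x : Path, s x < t x) (α : S) :
    ∃ e : Quot (faceRel s t comp α) ≃ Quot (germRelAt s t comp α),
      ∀ (a : Tup s t α) (h : s (compAll comp a.γ) = α),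
        e (Quot.mk _ a) = Quot.mk _ ⟨compAll comp a.γ, h⟩ := by
  -- the forward map
  have φwd : ∀ a b : Tup s t α, faceRel s t comp α a b →
      Quot.mk (germRelAt s t comp α)
          (⟨compAll comp a.γ, by rw [s_compAll s comp hs]; exact a.hsrc⟩ : PathFrom s α)
        = Quot.mk _ (⟨compAll comp b.γ, by rw [s_compAll s comp hs]; exact b.hsrc⟩ :
            PathFrom s α) := by
    rintro ⟨n, γa, ha1, ha2⟩ ⟨m, γb, hb1, hb2⟩ ⟨h, i, hb⟩
    simp only at h
    subst h
    simp only at hb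
    have hcast : (fun k : Fin (m+2) => γa (Fin.cast (by rw []) k)) = γa :=
      funext fun k => congrArg γa (Fin.ext rfl)
    rw [hcast] at hb
    have hilt : (i : ℕ) < m + 2 := i.isLt
    rcases Nat.lt_or_ge (i : ℕ) (m+1) with hi | hi
    · -- inner face: composites agree
      have : compAll comp γb = compAll comp γa := by
        rw [hb]; exact compAll_face comp hassoc i γa (by show (i : ℕ) ≤ m; omega)
      exact congrArg (Quot.mk _) (Subtype.ext this.symm)
    · -- last face: germ relation
      have hi' : (i : ℕ) = m + 1 := le_antisymm (by show (i : ℕ) ≤ m + 1; omega) hi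
      have hbγ : γb = fun j : Fin (m+1) => γa j.castSucc := by
        rw [hb]; exact funext fun j => face_last comp i hi' γa j
      have hsplit : compAll comp γa
          = comp (compAll comp γb) (γa (Fin.last (m+1))) := by
        rw [hbγ]; exact compAll_last comp hassoc γa
      refine (Quot.sound ?_).symm
      refine ⟨γa (Fin.last (m+1)), ?_, hsplit⟩
      show t (compAll comp γb) = s (γa (Fin.last (m+1)))
      rw [t_compAll t comp ht γb, hbγ]
      have := ha2 (Fin.last m)
      have e2 : (Fin.last m).succ = Fin.last (m+1) := Fin.ext rfl
      rw [e2] at this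
      exact this
  -- the backward map
  have ψwd : ∀ x y : PathFrom s α, germRelAt s t comp α x y →
      Quot.mk (faceRel s t comp α) (tup0 s t x.1 x.2)
        = Quot.mk _ (tup0 s t y.1 y.2) := by
    rintro x y ⟨z, hz1, hz2⟩
    set γ1 : Fin 2 → Path := fun j => if (j : ℕ) = 0 then x.1 else z with hγ1
    have hγ10 : γ1 0 = x.1 := by simp [hγ1]
    have hγ11 : γ1 1 = z := by simp [hγ1]
    have hT1src : s (γ1 0) = α := by rw [hγ10]; exact x.2
    have hT1comp : ∀ j : Fin 1, t (γ1 j.castSucc) = s (γ1 j.succ) := by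
      intro j
      have hj : j = 0 := Fin.ext (by omega)
      subst hj
      have e1 : γ1 (0 : Fin 1).castSucc = x.1 := by
        rw [show (0 : Fin 1).castSucc = 0 from Fin.ext rfl, hγ10]
      have e2 : γ1 (0 : Fin 1).succ = z := by
        rw [show (0 : Fin 1).succ = 1 from Fin.ext rfl, hγ11]
      rw [e1, e2]; exact hz1
    set T1 : Tup s t α := ⟨1, γ1, hT1src, hT1comp⟩ with hT1
    have hcast : (fun k : Fin 2 => γ1 (Fin.cast (by rw []) k)) = γ1 :=
      funext fun k => congrArg γ1 (Fin.ext rfl)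
    have r1 : faceRel s t comp α T1 (tup0 s t x.1 x.2) := by
      refine ⟨rfl, 1, ?_⟩
      show (fun _ : Fin 1 => x.1) = face comp 1 (fun k : Fin 2 => γ1 (Fin.cast (by rw []) k))
      rw [hcast]
      funext j
      have hj : j = 0 := Fin.ext (by omega)
      subst hj
      rw [face_last comp 1 rfl γ1 0,
        show (0 : Fin 1).castSucc = 0 from Fin.ext rfl, hγ10]
    have r2 : faceRel s t comp α T1 (tup0 s t y.1 y.2) := by
      refine ⟨rfl, 0, ?_⟩
      show (fun _ : Fin 1 => y.1) = face comp 0 (fun k : Fin 2 => γ1 (Fin.cast (by rw []) k))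
      rw [hcast]
      funext j
      have hj : j = 0 := Fin.ext (by omega)
      subst hj
      rw [face_zero_zero comp γ1, hγ10, hγ11]
      exact hz2
    exact (Quot.sound r1).symm.trans (Quot.sound r2)
  refine ⟨⟨Quot.lift _ φwd, Quot.lift _ ψwd, ?_, ?_⟩, ?_⟩
  · intro q
    induction q using Quot.ind with | _ a => ?_
    exact (mk_eq_mk_compAll comp hs ht hassoc a).symm
  · intro q
    induction q using Quot.ind with | _ x => ?_
    exact congrArg (Quot.mk (germRelAt s t comp α)) (Subtype.ext rfl)
  · intro a h
    rfl
end
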